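/- There exists a strictly increasing continuous bijection h : [0,1] → [0,1] such that h(x/(1+x)) = h(x)/2 and h(1−x) = 1 − h(x) for all x ∈ [0,1]; moreover any such h conjugates the Farey map to the tent map, i.e. h(Φ(x)) = T(h(x)) for all x ∈ [0,1], where Φ(x) = min(x/(1−x), (1−x)/x) and T(y) = min(2y, 2−2y). -/

import Mathlib

/-- The Farey map `Φ(x) = min(x/(1-x), (1-x)/x)`. -/
noncomputable def fareyMap (x : ℝ) : ℝ :=
  min (x / (1 - x)) ((1 - x) / x)

/-- The tent map `T(y) = min(2y, 2-2y)`. -/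
def tentMap (y : ℝ) : ℝ :=
  min (2 * y) (2 - 2 * y)

/-- `h` is a strictly increasing continuous bijection of `[0,1]` onto itself satisfying the
two functional equations `h(x/(1+x)) = h(x)/2` and `h(1-x) = 1-h(x)` of the Minkowski
question mark function. -/
def IsMinkowskiQuestionMark (h : ℝ → ℝ) : Prop :=
  StrictMonoOn h (Set.Icc 0 1) ∧
  ContinuousOn h (Set.Icc 0 1) ∧
  Set.BijOn h (Set.Icc 0 1) (Set.Icc 0 1) ∧
  (∀ x ∈ Set.Icc (0 : ℝ) 1, h (x / (1 + x)) = h x / 2) ∧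
  (∀ x ∈ Set.Icc (0 : ℝ) 1, h (1 - x) = 1 - h x)

/-!
Existence: the two functional equations say that `h` is a fixed point of the operator
`f ↦ (x ↦ f (x/(1-x))/2 on [0,1/2], 1 - f ((1-x)/x)/2 on [1/2,1])`, a `1/2`-contraction of the
complete space of monotone continuous maps of `[0,1]` fixing `0` and `1`.

Any monotone solution conjugates `Φ` to `T`: on `[0,1/2]` the first equation reads
`h (Φ x) = 2 h x`, and both maps commute with `x ↦ 1 - x`. It is also strictly monotone. If
`h a = h b` with `a < b`, we may assume `b ≤ 1/2`, by symmetry and because `a < 1/2 < b` would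
force `h (Φ a) = 1` with `Φ a < 1`, which a similar descent rules out. Then `Φ` maps `[a,b]`
onto an interval with the same property whose length `ℓ'` satisfies `1/ℓ' ≤ 1/ℓ - 1`, which
cannot go on forever.
-/

open Set unitInterval

theorem forall_not_of_exists_le_sub_one {α : Type*} {P : α → Prop} (μ : α → ℝ)
    (hμ : ∀ p, P p → 0 ≤ μ p) (hstep : ∀ p, P p → ∃ q, P q ∧ μ q ≤ μ p - 1) (p : α) :
    ¬ P p := by
  intro hp
  obtain ⟨n, hn⟩ := exists_nat_gt (μ p)
  induction n generalizing p with
  | zero => exact absurd (hμ p hp) (by simpa using hn)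
  | succ n ih =>
    obtain ⟨q, hq, hμq⟩ := hstep p hp
    exact ih q hq (by push_cast at hn; linarith)

theorem fareyMap_one_sub (x : ℝ) : fareyMap (1 - x) = fareyMap x := by
  simp only [fareyMap, sub_sub_cancel, min_comm]

theorem fareyMap_of_le_half {x : ℝ} (hx0 : 0 ≤ x) (hx : x ≤ 1 / 2) :
    fareyMap x = x / (1 - x) := by
  rcases hx0.eq_or_lt with rfl | hx0
  · simp [fareyMap]
  · exact min_eq_left (by rw [div_le_div_iff₀ (by linarith) hx0]; nlinarith)

theorem tentMap_one_sub (y : ℝ) : tentMap (1 - y) = tentMap y := by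
  unfold tentMap
  rw [min_comm]
  congr 1 <;> ring

theorem tentMap_of_le_half {y : ℝ} (hy : y ≤ 1 / 2) : tentMap y = 2 * y :=
  min_eq_left (by linarith)

theorem inv_sub_div_one_sub_le {a b : ℝ} (ha : 0 ≤ a) (hab : a < b) (hb : b ≤ 1 / 2) :
    (b / (1 - b) - a / (1 - a))⁻¹ ≤ (b - a)⁻¹ - 1 := by
  have hba : 0 < b - a := sub_pos.mpr hab
  have hgap : b / (1 - b) - a / (1 - a) = (b - a) / ((1 - a) * (1 - b)) := by
    rw [div_sub_div _ _ (by linarith) (by linarith)]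
    ring
  rw [hgap, inv_div, div_le_iff₀ hba, sub_mul (b - a)⁻¹, inv_mul_cancel₀ hba.ne']
  nlinarith

def IsFlatPair (h : ℝ → ℝ) (a b : ℝ) : Prop :=
  0 ≤ a ∧ a < b ∧ b ≤ 1 ∧ h a = h b

structure MinkowskiEquations (h : ℝ → ℝ) : Prop where
  map_div_one_add : ∀ x ∈ Icc (0 : ℝ) 1, h (x / (1 + x)) = h x / 2
  map_one_sub : ∀ x ∈ Icc (0 : ℝ) 1, h (1 - x) = 1 - h x

namespace MinkowskiEquations

variable {h : ℝ → ℝ}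

theorem map_zero (H : MinkowskiEquations h) : h 0 = 0 := by
  have := H.map_div_one_add 0 (by simp)
  simp only [zero_div] at this
  linarith

theorem map_one (H : MinkowskiEquations h) : h 1 = 1 := by
  simpa [H.map_zero] using H.map_one_sub 0 (by simp)

theorem map_half (H : MinkowskiEquations h) : h (1 / 2) = 1 / 2 := by
  have := H.map_one_sub (1 / 2) (by norm_num)
  norm_num at this
  linarith

theorem map_div_one_sub (H : MinkowskiEquations h) {y : ℝ} (hy0 : 0 ≤ y) (hy : y ≤ 1 / 2) :
    h (y / (1 - y)) = 2 * h y := by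
  have hy1 : 0 < 1 - y := by linarith
  have hx : y / (1 - y) ∈ Icc (0 : ℝ) 1 :=
    ⟨div_nonneg hy0 hy1.le, by rw [div_le_one hy1]; linarith⟩
  have hinv : y / (1 - y) / (1 + y / (1 - y)) = y := by
    field_simp
    ring
  have := H.map_div_one_add _ hx
  rw [hinv] at this
  linarith

theorem map_fareyMap (H : MinkowskiEquations h) (hmono : MonotoneOn h (Icc 0 1)) {x : ℝ}
    (hx : x ∈ Icc (0 : ℝ) 1) : h (fareyMap x) = tentMap (h x) := by
  have hleft : ∀ y ∈ Icc (0 : ℝ) (1 / 2), h (fareyMap y) = tentMap (h y) := by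
    rintro y ⟨hy0, hy⟩
    have hhy : h y ≤ 1 / 2 :=
      H.map_half ▸ hmono ⟨hy0, by linarith⟩ ⟨by norm_num, by norm_num⟩ hy
    rw [fareyMap_of_le_half hy0 hy, H.map_div_one_sub hy0 hy, tentMap_of_le_half hhy]
  rcases le_total x (1 / 2) with hx2 | hx2
  · exact hleft x ⟨hx.1, hx2⟩
  · rw [← fareyMap_one_sub, hleft (1 - x) ⟨by linarith [hx.2], by linarith⟩,
      H.map_one_sub x hx, tentMap_one_sub]

theorem map_pos (H : MinkowskiEquations h) (hmono : MonotoneOn h (Icc 0 1)) {x : ℝ}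
    (hx : x ∈ Ioc (0 : ℝ) 1) : 0 < h x := by
  refine (H.map_zero ▸ hmono ⟨le_rfl, zero_le_one⟩ (Ioc_subset_Icc_self hx) hx.1.le).lt_of_ne'
    fun hx0 ↦ forall_not_of_exists_le_sub_one (P := fun y ↦ y ∈ Ioc (0 : ℝ) 1 ∧ h y = 0)
      (·⁻¹) (fun y hy ↦ inv_nonneg.mpr hy.1.1.le) ?_ x ⟨hx, hx0⟩
  rintro y ⟨⟨hy0, hy1⟩, hhy⟩
  have hy2 : y ≤ 1 / 2 := by
    by_contra! hy2
    have := hmono ⟨by norm_num, by norm_num⟩ ⟨hy0.le, hy1⟩ hy2.le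
    linarith [H.map_half]
  have hy' : 0 < 1 - y := by linarith
  refine ⟨y / (1 - y), ⟨⟨by positivity, by rw [div_le_one hy']; linarith⟩, ?_⟩, ?_⟩
  · rw [H.map_div_one_sub hy0.le hy2, hhy, mul_zero]
  · rw [inv_div, sub_div, div_self hy0.ne', one_div]

theorem map_lt_one (H : MinkowskiEquations h) (hmono : MonotoneOn h (Icc 0 1)) {x : ℝ}
    (hx : x ∈ Ico (0 : ℝ) 1) : h x < 1 := by
  have := H.map_pos hmono (x := 1 - x) ⟨by linarith [hx.2], by linarith [hx.1]⟩
  linarith [H.map_one_sub x (Ico_subset_Icc_self hx)]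

theorem exists_isFlatPair_le_half (H : MinkowskiEquations h) (hmono : MonotoneOn h (Icc 0 1))
    {a b : ℝ} (hp : IsFlatPair h a b) :
    ∃ a' b', IsFlatPair h a' b' ∧ b' ≤ 1 / 2 ∧ b' - a' = b - a := by
  obtain ⟨ha, hab, hb, he⟩ := hp
  rcases le_or_gt b (1 / 2) with hb2 | hb2
  · exact ⟨a, b, ⟨ha, hab, hb, he⟩, hb2, rfl⟩
  rcases le_or_gt (1 / 2) a with ha2 | ha2
  · refine ⟨1 - b, 1 - a, ⟨by linarith, by linarith, by linarith, ?_⟩, by linarith, by ring⟩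
    rw [H.map_one_sub a ⟨ha, by linarith⟩, H.map_one_sub b ⟨by linarith, hb⟩, he]
  exfalso
  have hmid : (1 / 2 : ℝ) ∈ Icc 0 1 := ⟨by norm_num, by norm_num⟩
  have hle := hmono ⟨ha, by linarith⟩ hmid ha2.le
  have hge := hmono hmid ⟨by linarith, hb⟩ hb2.le
  have hha : h a = 1 / 2 := by rw [H.map_half] at hle hge; linarith
  have hda : 0 < 1 - a := by linarith
  have := H.map_lt_one hmono (x := a / (1 - a))
    ⟨div_nonneg ha hda.le, by rw [div_lt_one hda]; linarith⟩
  rw [H.map_div_one_sub ha ha2.le, hha] at this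
  norm_num at this

theorem exists_isFlatPair_inv_sub_le (H : MinkowskiEquations h) {a b : ℝ}
    (hp : IsFlatPair h a b) (hb : b ≤ 1 / 2) :
    ∃ a' b', IsFlatPair h a' b' ∧ (b' - a')⁻¹ ≤ (b - a)⁻¹ - 1 := by
  obtain ⟨ha, hab, -, he⟩ := hp
  have hda : 0 < 1 - a := by linarith
  have hdb : 0 < 1 - b := by linarith
  refine ⟨a / (1 - a), b / (1 - b), ⟨div_nonneg ha hda.le, ?_, ?_, ?_⟩,
    inv_sub_div_one_sub_le ha hab hb⟩
  · rw [div_lt_div_iff₀ hda hdb]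
    nlinarith
  · rw [div_le_one hdb]
    linarith
  · rw [H.map_div_one_sub ha (by linarith), H.map_div_one_sub (by linarith) hb, he]

theorem not_isFlatPair (H : MinkowskiEquations h) (hmono : MonotoneOn h (Icc 0 1)) (a b : ℝ) :
    ¬ IsFlatPair h a b :=
  forall_not_of_exists_le_sub_one (P := fun p : ℝ × ℝ ↦ IsFlatPair h p.1 p.2)
    (fun p ↦ (p.2 - p.1)⁻¹) (fun _ hp ↦ inv_nonneg.mpr (sub_nonneg.mpr hp.2.1.le))
    (fun _ hp ↦ by
      obtain ⟨a, b, hab, hb, hgap⟩ := H.exists_isFlatPair_le_half hmono hp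
      obtain ⟨a', b', hab', hinv⟩ := H.exists_isFlatPair_inv_sub_le hab hb
      exact ⟨(a', b'), hab', hgap ▸ hinv⟩)
    (a, b)

theorem strictMonoOn (H : MinkowskiEquations h) (hmono : MonotoneOn h (Icc 0 1)) :
    StrictMonoOn h (Icc 0 1) := fun a ha b hb hab ↦
  (hmono ha hb hab.le).lt_of_ne fun he ↦ H.not_isFlatPair hmono a b ⟨ha.1, hab, hb.2, he⟩

theorem isMinkowskiQuestionMark (H : MinkowskiEquations h) (hmono : MonotoneOn h (Icc 0 1))
    (hcont : ContinuousOn h (Icc 0 1)) : IsMinkowskiQuestionMark h := by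
  have hsurj := intermediate_value_Icc zero_le_one hcont
  rw [H.map_zero, H.map_one] at hsurj
  refine ⟨H.strictMonoOn hmono, hcont, ⟨fun x hx ↦ ⟨?_, ?_⟩, (H.strictMonoOn hmono).injOn, hsurj⟩,
    H.map_div_one_add, H.map_one_sub⟩
  · exact H.map_zero ▸ hmono ⟨le_rfl, zero_le_one⟩ hx hx.1
  · exact H.map_one ▸ hmono hx ⟨zero_le_one, le_rfl⟩ hx.2

end MinkowskiEquations

noncomputable def fareyBranch (x : I) : I :=
  ⟨min (x : ℝ) (1 / 2) / (1 - min (x : ℝ) (1 / 2)), by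
    have h0 : 0 ≤ min (x : ℝ) (1 / 2) := le_min x.2.1 (by norm_num)
    have h1 : min (x : ℝ) (1 / 2) ≤ 1 / 2 := min_le_right _ _
    exact ⟨div_nonneg h0 (by linarith), by rw [div_le_one (by linarith)]; linarith⟩⟩

theorem continuous_fareyBranch : Continuous fareyBranch := by
  refine Continuous.subtype_mk (Continuous.div (by fun_prop) (by fun_prop) fun x ↦ ?_) _
  linarith [min_le_right (x : ℝ) (1 / 2)]

theorem monotone_fareyBranch : Monotone fareyBranch := by
  intro a b hab
  change min (a : ℝ) (1 / 2) / (1 - min (a : ℝ) (1 / 2))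
    ≤ min (b : ℝ) (1 / 2) / (1 - min (b : ℝ) (1 / 2))
  have hm : min (a : ℝ) (1 / 2) ≤ min (b : ℝ) (1 / 2) := min_le_min_right _ hab
  have h0 : 0 ≤ min (a : ℝ) (1 / 2) := le_min a.2.1 (by norm_num)
  have h1 : min (b : ℝ) (1 / 2) ≤ 1 / 2 := min_le_right _ _
  rw [div_le_div_iff₀ (by linarith) (by linarith)]
  nlinarith

theorem coe_fareyBranch_of_le_half {x : I} (hx : (x : ℝ) ≤ 1 / 2) :
    (fareyBranch x : ℝ) = x / (1 - x) := by
  simp only [fareyBranch, min_eq_left hx]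

theorem fareyBranch_of_half_le {x : I} (hx : 1 / 2 ≤ (x : ℝ)) : fareyBranch x = 1 := by
  ext
  simp only [fareyBranch, min_eq_right hx, Icc.coe_one]
  norm_num

theorem fareyBranch_zero : fareyBranch 0 = 0 := by
  ext
  rw [coe_fareyBranch_of_le_half (by norm_num)]
  simp

/-- For `f 1 = 1` one of the two terms is `f 1`, so this is `f (x/(1-x))/2` for `x ≤ 1/2` and
`1 - f ((1-x)/x)/2` for `x ≥ 1/2`, glued continuously without a case split. -/
noncomputable def questionMarkStep (f : C(I, ℝ)) : C(I, ℝ) :=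
  ⟨fun x ↦ (f (fareyBranch x) - f (fareyBranch (σ x)) + 1) / 2, by
    have := continuous_fareyBranch
    fun_prop⟩

theorem questionMarkStep_apply (f : C(I, ℝ)) (x : I) :
    questionMarkStep f x = (f (fareyBranch x) - f (fareyBranch (σ x)) + 1) / 2 :=
  rfl

def normalizedMonotone : Set C(I, ℝ) := {f | f 0 = 0 ∧ f 1 = 1 ∧ Monotone f}

theorem isClosed_normalizedMonotone : IsClosed normalizedMonotone :=
  (isClosed_eq (continuous_eval_const 0) continuous_const).inter <|
    (isClosed_eq (continuous_eval_const 1) continuous_const).inter <|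
      isClosed_monotone.preimage continuous_coeFun

theorem mapsTo_questionMarkStep :
    MapsTo questionMarkStep normalizedMonotone normalizedMonotone := by
  rintro f ⟨hf0, hf1, hfmono⟩
  refine ⟨?_, ?_, fun x y hxy ↦ ?_⟩
  · rw [questionMarkStep_apply, symm_zero, fareyBranch_zero,
      fareyBranch_of_half_le (by norm_num), hf0, hf1]
    norm_num
  · rw [questionMarkStep_apply, symm_one, fareyBranch_zero,
      fareyBranch_of_half_le (by norm_num), hf0, hf1]
    norm_num
  · have h1 := hfmono (monotone_fareyBranch hxy)
    have h2 := hfmono (monotone_fareyBranch (symm_le_symm.mpr hxy))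
    rw [questionMarkStep_apply, questionMarkStep_apply]
    linarith

theorem lipschitzOnWith_questionMarkStep :
    LipschitzOnWith (1 / 2) questionMarkStep normalizedMonotone := by
  refine LipschitzOnWith.of_dist_le_mul fun f ⟨_, hf1, _⟩ g ⟨_, hg1, _⟩ ↦ ?_
  rw [ContinuousMap.dist_le (by positivity)]
  intro x
  have hdist : ∀ y, |f y - g y| ≤ dist f g := fun y ↦
    Real.dist_eq (f y) (g y) ▸ ContinuousMap.dist_apply_le_dist y
  rw [Real.dist_eq, questionMarkStep_apply, questionMarkStep_apply, abs_le]
  push_cast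
  rcases le_total (x : ℝ) (1 / 2) with hx | hx
  · rw [fareyBranch_of_half_le ((half_le_symm_iff x).mpr hx), hf1, hg1]
    have := abs_le.mp (hdist (fareyBranch x))
    constructor <;> linarith
  · rw [fareyBranch_of_half_le hx, hf1, hg1]
    have := abs_le.mp (hdist (fareyBranch (σ x)))
    constructor <;> linarith

theorem exists_fixedPoint_questionMarkStep :
    ∃ F ∈ normalizedMonotone, questionMarkStep F = F := by
  obtain ⟨F, hF, hfix, -⟩ := ContractingWith.exists_fixedPoint' (K := 1 / 2)
    isClosed_normalizedMonotone.isComplete mapsTo_questionMarkStep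
    ⟨by norm_num, lipschitzOnWith_questionMarkStep.mapsToRestrict mapsTo_questionMarkStep⟩
    (x := ⟨Subtype.val, continuous_subtype_val⟩) ⟨rfl, rfl, fun _ _ h ↦ h⟩ (edist_ne_top _ _)
  exact ⟨F, hF, hfix⟩

theorem exists_minkowskiEquations_monotone_continuous :
    ∃ h : ℝ → ℝ, MinkowskiEquations h ∧ Monotone h ∧ Continuous h := by
  obtain ⟨F, ⟨-, hF1, hFmono⟩, hfix⟩ := exists_fixedPoint_questionMarkStep
  have hF (x : I) : F x = (F (fareyBranch x) - F (fareyBranch (σ x)) + 1) / 2 := by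
    rw [← questionMarkStep_apply, hfix]
  have hFsymm (x : I) : F (σ x) = 1 - F x := by
    have := hF (σ x)
    rw [symm_symm] at this
    linarith [hF x]
  have hFhalf {x : I} (hx : (x : ℝ) ≤ 1 / 2) : F x = F (fareyBranch x) / 2 := by
    rw [hF x, fareyBranch_of_half_le ((half_le_symm_iff x).mpr hx), hF1]
    ring
  refine ⟨IccExtend zero_le_one F, ⟨fun x hx ↦ ?_, fun x hx ↦ ?_⟩,
    hFmono.IccExtend _, F.continuous.Icc_extend'⟩
  · have hx1 : 0 < 1 + x := by linarith [hx.1]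
    have hy2 : x / (1 + x) ≤ 1 / 2 := by rw [div_le_iff₀ hx1]; linarith [hx.2]
    have hy : x / (1 + x) ∈ I := ⟨div_nonneg hx.1 hx1.le, by linarith⟩
    rw [IccExtend_of_mem _ _ hy, IccExtend_of_mem _ _ hx, hFhalf (x := ⟨_, hy⟩) hy2]
    congr 2
    ext
    rw [coe_fareyBranch_of_le_half hy2]
    field_simp
    ring
  · rw [IccExtend_of_mem _ _ hx, IccExtend_of_mem _ _ (Icc.mem_iff_one_sub_mem.mp hx),
      ← hFsymm]
    rfl

/-- There exists a Minkowski question mark homeomorphism, and every such function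
conjugates the Farey map to the tent map on `[0,1]`. -/
theorem minkowski_exists_and_conjugates :
    (∃ h : ℝ → ℝ, IsMinkowskiQuestionMark h) ∧
    ∀ h : ℝ → ℝ, IsMinkowskiQuestionMark h →
      ∀ x ∈ Set.Icc (0 : ℝ) 1, h (fareyMap x) = tentMap (h x) := by
  refine ⟨?_, fun h hh x hx ↦ MinkowskiEquations.map_fareyMap ⟨hh.2.2.2.1, hh.2.2.2.2⟩
    hh.1.monotoneOn hx⟩
  obtain ⟨h, H, hmono, hcont⟩ := exists_minkowskiEquations_monotone_continuous
  exact ⟨h, H.isMinkowskiQuestionMark (hmono.monotoneOn _) hcont.continuousOn⟩
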